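/- Let n ≥ 1 and 1 ≤ j, k, α, β ≤ n, and let z_{jα}(g) = g_{j,α} and w_{jα}(g) = g_{j,n+α} for g ∈ ℂ^{2n×2n}. Then on Sp(n) the conformality operator satisfies κ(z_{jα}, z_{kβ}) = −(1/2)·z_{kα} z_{jβ}, κ(w_{jα}, w_{kβ}) = −(1/2)·w_{kα} w_{jβ}, and κ(z_{jα}, w_{kβ}) = −(1/2)·z_{kα} w_{jβ}, where each identity holds pointwise at every g ∈ Sp(n). -/

import Mathlib

open Matrix

noncomputable section

/-- The matrix unit `E_{rs}` in `ℂ^{n×n}`. -/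
def matE (n : ℕ) (r s : Fin n) : Matrix (Fin n) (Fin n) ℂ :=
  Matrix.single r s 1

/-- `X_{rs} = (E_{rs} + E_{sr})/√2`. -/
def matX (n : ℕ) (r s : Fin n) : Matrix (Fin n) (Fin n) ℂ :=
  ((Real.sqrt 2 : ℂ))⁻¹ • (matE n r s + matE n s r)

/-- `Y_{rs} = (E_{rs} − E_{sr})/√2`. -/
def matY (n : ℕ) (r s : Fin n) : Matrix (Fin n) (Fin n) ℂ :=
  ((Real.sqrt 2 : ℂ))⁻¹ • (matE n r s - matE n s r)

/-- `ℂ^{2n×2n}`, with the two blocks of indices given by `Fin n ⊕ Fin n`. -/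
abbrev Mat2 (n : ℕ) := Matrix (Fin n ⊕ Fin n) (Fin n ⊕ Fin n) ℂ

/-- The quaternionic unitary group `Sp(n)`: the subgroup of `U(2n)` of matrices of the
block form `[[z, w], [−conj w, conj z]]`. -/
def SpGroup (n : ℕ) : Set (Mat2 n) :=
  {g | g ∈ Matrix.unitaryGroup (Fin n ⊕ Fin n) ℂ ∧
    ∀ i j : Fin n,
      g (Sum.inr i) (Sum.inr j) = starRingEnd ℂ (g (Sum.inl i) (Sum.inl j)) ∧
      g (Sum.inr i) (Sum.inl j) = -starRingEnd ℂ (g (Sum.inl i) (Sum.inr j))}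

/-- The basis elements `(1/√2)·diag(Y_{rs}, Y_{rs})` of `sp(n)`. -/
def spB1 (n : ℕ) (r s : Fin n) : Mat2 n :=
  ((Real.sqrt 2 : ℂ))⁻¹ • Matrix.fromBlocks (matY n r s) 0 0 (matY n r s)

/-- The basis elements `(1/√2)·diag(iX_{rs}, −iX_{rs})` of `sp(n)`. -/
def spB2 (n : ℕ) (r s : Fin n) : Mat2 n :=
  ((Real.sqrt 2 : ℂ))⁻¹ •
    Matrix.fromBlocks (Complex.I • matX n r s) 0 0 (-(Complex.I • matX n r s))

/-- The basis elements `(1/√2)·[[0, iX_{rs}], [iX_{rs}, 0]]` of `sp(n)`. -/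
def spB3 (n : ℕ) (r s : Fin n) : Mat2 n :=
  ((Real.sqrt 2 : ℂ))⁻¹ •
    Matrix.fromBlocks 0 (Complex.I • matX n r s) (Complex.I • matX n r s) 0

/-- The basis elements `(1/√2)·[[0, X_{rs}], [−X_{rs}, 0]]` of `sp(n)`. -/
def spB4 (n : ℕ) (r s : Fin n) : Mat2 n :=
  ((Real.sqrt 2 : ℂ))⁻¹ • Matrix.fromBlocks 0 (matX n r s) (-(matX n r s)) 0

/-- The basis elements `(1/√2)·diag(iD_t, −iD_t)` of `sp(n)`. -/
def spB5 (n : ℕ) (t : Fin n) : Mat2 n :=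
  ((Real.sqrt 2 : ℂ))⁻¹ •
    Matrix.fromBlocks (Complex.I • matE n t t) 0 0 (-(Complex.I • matE n t t))

/-- The basis elements `(1/√2)·[[0, iD_t], [iD_t, 0]]` of `sp(n)`. -/
def spB6 (n : ℕ) (t : Fin n) : Mat2 n :=
  ((Real.sqrt 2 : ℂ))⁻¹ •
    Matrix.fromBlocks 0 (Complex.I • matE n t t) (Complex.I • matE n t t) 0

/-- The basis elements `(1/√2)·[[0, D_t], [−D_t, 0]]` of `sp(n)`. -/
def spB7 (n : ℕ) (t : Fin n) : Mat2 n :=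
  ((Real.sqrt 2 : ℂ))⁻¹ • Matrix.fromBlocks 0 (matE n t t) (-(matE n t t)) 0

/-- `Z(f)(g) = (d/ds)|₀ f(g·exp(sZ))`. -/
def lieD1 {n : ℕ} (f : Mat2 n → ℂ) (g Z : Mat2 n) : ℂ :=
  deriv (fun s : ℝ => f (g * NormedSpace.exp ((s : ℂ) • Z))) 0

/-- `Z²(f)(g) = (d²/ds²)|₀ f(g·exp(sZ))`. -/
def lieD2 {n : ℕ} (f : Mat2 n → ℂ) (g Z : Mat2 n) : ℂ :=
  deriv (deriv (fun s : ℝ => f (g * NormedSpace.exp ((s : ℂ) • Z)))) 0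

/-- The Laplace–Beltrami operator (tension field) on `Sp(n)`:
`τ(f)(g) = Σ_{Z ∈ B} Z²(f)(g)` for the standard orthonormal basis `B` of `sp(n)`. -/
def tauSp (n : ℕ) (f : Mat2 n → ℂ) (g : Mat2 n) : ℂ :=
  (∑ r : Fin n, ∑ s : Fin n, if r < s then
      lieD2 f g (spB1 n r s) + lieD2 f g (spB2 n r s)
        + lieD2 f g (spB3 n r s) + lieD2 f g (spB4 n r s) else 0)
  + ∑ t : Fin n, (lieD2 f g (spB5 n t) + lieD2 f g (spB6 n t) + lieD2 f g (spB7 n t))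

/-- The conformality operator on `Sp(n)`:
`κ(f,h)(g) = Σ_{Z ∈ B} Z(f)(g)·Z(h)(g)`. -/
def kappaSp (n : ℕ) (f h : Mat2 n → ℂ) (g : Mat2 n) : ℂ :=
  (∑ r : Fin n, ∑ s : Fin n, if r < s then
      lieD1 f g (spB1 n r s) * lieD1 h g (spB1 n r s)
        + lieD1 f g (spB2 n r s) * lieD1 h g (spB2 n r s)
        + lieD1 f g (spB3 n r s) * lieD1 h g (spB3 n r s)
        + lieD1 f g (spB4 n r s) * lieD1 h g (spB4 n r s) else 0)
  + ∑ t : Fin n, (lieD1 f g (spB5 n t) * lieD1 h g (spB5 n t)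
      + lieD1 f g (spB6 n t) * lieD1 h g (spB6 n t)
      + lieD1 f g (spB7 n t) * lieD1 h g (spB7 n t))

/-!
At `g`, the derivative along `Z` of the coordinate function `e_{il} : w ↦ w i l` is `(g Z) i l`,
so `κ(e_{il}, e_{km})(g) = ∑_{a,c} g_{ia} g_{kc} C_{alcm}`, where `C_{abcd} = ∑_{Z ∈ B} Z_{ab} Z_{cd}`
is the Casimir tensor of `sp(n)`. A direct computation gives
`C_{abcd} = -½ (δ_{ad} δ_{bc} - J_{ac} J_{bd})` with `J = Matrix.J`, and since `Sp(n)` preserves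
the symplectic form (`g J gᵀ = J`), `κ(e_{il}, e_{km})(g) = -½ (g_{im} g_{kl} - J_{ik} J_{lm})`.
For two rows `i, k` in the first block `J_{ik} = 0`.
-/

theorem sum_sum_eq_two_nsmul_sum_lt_add_sum_diag {ι M : Type*} [Fintype ι] [LinearOrder ι]
    [AddCommMonoid M] (T : ι → ι → M) (hT : ∀ r s, T s r = T r s) :
    ∑ r, ∑ s, T r s = 2 • ∑ r, ∑ s, (if r < s then T r s else 0) + ∑ t, T t t := by
  have split (r s : ι) : T r s
      = (if r < s then T r s else 0) + (if s < r then T r s else 0) + if r = s then T r s else 0 := by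
    rcases lt_trichotomy r s with h | rfl | h
    · simp [h, h.ne, h.not_gt]
    · simp
    · simp [h, h.ne', h.not_gt]
  have swap : ∑ r, ∑ s, (if s < r then T r s else 0) = ∑ r, ∑ s, (if r < s then T r s else 0) := by
    rw [Finset.sum_comm]
    simp only [hT]
  calc ∑ r, ∑ s, T r s
      = ∑ r, ∑ s, ((if r < s then T r s else 0) + (if s < r then T r s else 0)
          + if r = s then T r s else 0) :=
        Finset.sum_congr rfl fun r _ => Finset.sum_congr rfl fun s _ => split r s
    _ = _ := by
        simp only [Finset.sum_add_distrib, swap, Finset.sum_ite_eq, Finset.mem_univ, if_true,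
          two_nsmul]

theorem Complex.ofReal_sqrt_two_inv_mul_self :
    ((Real.sqrt 2 : ℂ))⁻¹ * ((Real.sqrt 2 : ℂ))⁻¹ = 2⁻¹ := by
  rw [← mul_inv, ← Complex.ofReal_mul, Real.mul_self_sqrt zero_le_two]
  norm_num

section SpBasis

variable {n : ℕ}

theorem matX_comm (r s : Fin n) : matX n s r = matX n r s := by rw [matX, matX, add_comm]

theorem matY_comm (r s : Fin n) : matY n s r = -matY n r s := by
  rw [matY, matY, ← smul_neg, neg_sub]

theorem matY_self (t : Fin n) : matY n t t = 0 := by simp [matY]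

theorem matX_self (t : Fin n) : matX n t t = (Real.sqrt 2 : ℂ) • matE n t t := by
  have h : ((Real.sqrt 2 : ℂ))⁻¹ * 2 = Real.sqrt 2 := by
    rw [inv_mul_eq_iff_eq_mul₀ (by simp), ← Complex.ofReal_mul, Real.mul_self_sqrt zero_le_two]
    norm_num
  rw [matX, ← two_smul ℂ, smul_smul, h]

theorem spB1_comm (r s : Fin n) : spB1 n s r = -spB1 n r s := by
  rw [spB1, spB1, matY_comm, ← smul_neg, Matrix.fromBlocks_neg, neg_zero]

theorem spB2_comm (r s : Fin n) : spB2 n s r = spB2 n r s := by rw [spB2, spB2, matX_comm]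

theorem spB3_comm (r s : Fin n) : spB3 n s r = spB3 n r s := by rw [spB3, spB3, matX_comm]

theorem spB4_comm (r s : Fin n) : spB4 n s r = spB4 n r s := by rw [spB4, spB4, matX_comm]

theorem spB1_self (t : Fin n) : spB1 n t t = 0 := by simp [spB1, matY_self]

theorem spB2_self (t : Fin n) : spB2 n t t = (Real.sqrt 2 : ℂ) • spB5 n t := by
  rw [spB2, spB5, matX_self]
  simp only [Matrix.fromBlocks_smul, smul_neg, smul_zero, smul_comm (Real.sqrt 2 : ℂ) Complex.I,
    smul_comm (Real.sqrt 2 : ℂ) ((Real.sqrt 2 : ℂ))⁻¹]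

theorem spB3_self (t : Fin n) : spB3 n t t = (Real.sqrt 2 : ℂ) • spB6 n t := by
  rw [spB3, spB6, matX_self]
  simp only [Matrix.fromBlocks_smul, smul_zero, smul_comm (Real.sqrt 2 : ℂ) Complex.I,
    smul_comm (Real.sqrt 2 : ℂ) ((Real.sqrt 2 : ℂ))⁻¹]

theorem spB4_self (t : Fin n) : spB4 n t t = (Real.sqrt 2 : ℂ) • spB7 n t := by
  rw [spB4, spB7, matX_self]
  simp only [Matrix.fromBlocks_smul, smul_neg, smul_zero,
    smul_comm (Real.sqrt 2 : ℂ) ((Real.sqrt 2 : ℂ))⁻¹]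

end SpBasis

section LieDerivative

variable {n : ℕ}

theorem lieD1_real_smul (f : Mat2 n → ℂ) (g Z : Mat2 n) (c : ℝ) :
    lieD1 f g ((c : ℂ) • Z) = c * lieD1 f g Z := by
  have key := deriv_comp_mul_left c (fun s : ℝ => f (g * NormedSpace.exp ((s : ℂ) • Z))) 0
  rw [mul_zero, Complex.real_smul] at key
  rw [lieD1, lieD1, ← key]
  simp only [smul_smul, Complex.ofReal_mul, mul_comm]

attribute [local instance] Matrix.linftyOpNormedRing Matrix.linftyOpNormedAlgebra in
theorem lieD1_entry (g Z : Mat2 n) (i l : Fin n ⊕ Fin n) :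
    lieD1 (fun w => w i l) g Z = (g * Z) i l := by
  have hexp : HasDerivAt (fun s : ℝ => NormedSpace.exp ((s : ℂ) • Z)) Z 0 := by
    have h := hasDerivAt_exp_smul_const (𝕂 := ℝ) Z 0
    rw [zero_smul, NormedSpace.exp_zero, one_mul] at h
    simp_rw [Complex.coe_smul]
    exact h
  let entry : Mat2 n →L[ℝ] ℂ := LinearMap.toContinuousLinearMap (entryLinearMap ℝ ℂ i l)
  exact (entry.hasFDerivAt.comp_hasDerivAt 0 (hexp.const_mul g)).deriv

end LieDerivative

def spPairSum (n : ℕ) (F : Mat2 n → ℂ) : ℂ :=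
  ∑ r : Fin n, ∑ s : Fin n,
    (F (spB1 n r s) + F (spB2 n r s) + F (spB3 n r s) + F (spB4 n r s))

section PairSum

variable {n : ℕ}

/- The pair families are (anti)symmetric in `(r, s)`, and at `r = s` they are `0` and `√2` times
the three diagonal families, which therefore get absorbed into the sum over all pairs. -/
theorem kappaSp_eq_half_spPairSum (f h : Mat2 n → ℂ) (g : Mat2 n) :
    kappaSp n f h g = 2⁻¹ * spPairSum n (fun Z => lieD1 f g Z * lieD1 h g Z) := by
  set P : Mat2 n → ℂ := fun Z => lieD1 f g Z * lieD1 h g Z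
  have P_real_smul (c : ℝ) (Z : Mat2 n) : P ((c : ℂ) • Z) = c ^ 2 * P Z := by
    simp only [P, lieD1_real_smul]
    ring
  have P_neg (Z : Mat2 n) : P (-Z) = P Z := by simpa using P_real_smul (-1) Z
  have P_sqrt_two_smul (Z : Mat2 n) : P ((Real.sqrt 2 : ℂ) • Z) = 2 * P Z := by
    rw [P_real_smul, ← Complex.ofReal_pow, Real.sq_sqrt zero_le_two]
    norm_num
  have P_zero : P 0 = 0 := by simpa using P_real_smul 0 0
  set T : Fin n → Fin n → ℂ := fun r s =>
    P (spB1 n r s) + P (spB2 n r s) + P (spB3 n r s) + P (spB4 n r s)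
  have T_comm (r s : Fin n) : T s r = T r s := by
    simp only [T]
    rw [spB1_comm, spB2_comm, spB3_comm, spB4_comm, P_neg]
  have T_self (t : Fin n) : T t t = 2 * (P (spB5 n t) + P (spB6 n t) + P (spB7 n t)) := by
    simp only [T, spB1_self, spB2_self, spB3_self, spB4_self, P_zero, P_sqrt_two_smul]
    ring
  have hsum := sum_sum_eq_two_nsmul_sum_lt_add_sum_diag T T_comm
  simp only [T_self, ← Finset.mul_sum, two_nsmul] at hsum
  rw [spPairSum, hsum, kappaSp]
  ring

theorem spPairSum_sum_mul {ι : Type*} (s : Finset ι) (c : ι → ℂ) (F : ι → Mat2 n → ℂ) :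
    spPairSum n (fun Z => ∑ x ∈ s, c x * F x Z) = ∑ x ∈ s, c x * spPairSum n (F x) := by
  simp only [spPairSum, Finset.mul_sum, mul_add, ← Finset.sum_add_distrib]
  conv_rhs => rw [Finset.sum_comm]
  exact Finset.sum_congr rfl fun r _ => Finset.sum_comm

set_option maxHeartbeats 400000 in
theorem spPairSum_entry_mul_entry (a b c d : Fin n ⊕ Fin n) :
    spPairSum n (fun Z => Z a b * Z c d)
      = -((1 : Mat2 n) a d * (1 : Mat2 n) b c - J (Fin n) ℂ a c * J (Fin n) ℂ b d) := by
  have h4 : ((Real.sqrt 2 : ℂ))⁻¹ * ((Real.sqrt 2 : ℂ))⁻¹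
      * (((Real.sqrt 2 : ℂ))⁻¹ * ((Real.sqrt 2 : ℂ))⁻¹) = 4⁻¹ := by
    rw [Complex.ofReal_sqrt_two_inv_mul_self]
    norm_num
  have hI4 : ((Real.sqrt 2 : ℂ))⁻¹ * (Complex.I * ((Real.sqrt 2 : ℂ))⁻¹)
      * (((Real.sqrt 2 : ℂ))⁻¹ * (Complex.I * ((Real.sqrt 2 : ℂ))⁻¹)) = -4⁻¹ := by
    linear_combination Complex.I ^ 2 * h4 + 4⁻¹ * Complex.I_mul_I
  rcases a with a | a <;> rcases b with b | b <;> rcases c with c | c <;> rcases d with d | d <;>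
    simp [spPairSum, spB1, spB2, spB3, spB4, matX, matY, matE, Matrix.J, Matrix.one_apply,
      Matrix.single_apply, mul_add, add_mul, sub_mul, mul_sub, Finset.sum_add_distrib,
      Finset.sum_sub_distrib, ite_and, Finset.sum_ite_eq', h4, hI4] <;>
    split_ifs <;> subst_vars <;> simp_all <;> ring

end PairSum

section Symplectic

variable {n : ℕ}

theorem SpGroup.mul_J {g : Mat2 n} (hg : g ∈ SpGroup n) :
    g * J (Fin n) ℂ = J (Fin n) ℂ * gᴴᵀ := by
  ext (a | a) (b | b) <;>
    simp [Matrix.J, Matrix.mul_apply, Fintype.sum_sum_type, Matrix.fromBlocks, Matrix.one_apply,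
      (hg.2 _ _).1, (hg.2 _ _).2]

theorem SpGroup.mem_symplecticGroup {g : Mat2 n} (hg : g ∈ SpGroup n) :
    g ∈ symplecticGroup (Fin n) ℂ := by
  have hu : g * gᴴ = 1 := Matrix.mem_unitaryGroup_iff.mp hg.1
  rw [SymplecticGroup.mem_iff, SpGroup.mul_J hg, Matrix.mul_assoc, ← Matrix.transpose_mul, hu,
    Matrix.transpose_one, Matrix.mul_one]

theorem SpGroup.sum_mul_mul_J {g : Mat2 n} (hg : g ∈ SpGroup n) (i k : Fin n ⊕ Fin n) :
    ∑ a, ∑ c, g i a * g k c * J (Fin n) ℂ a c = J (Fin n) ℂ i k := by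
  have hJ := SymplecticGroup.mem_iff.mp (SpGroup.mem_symplecticGroup hg)
  conv_rhs => rw [← hJ]
  simp only [Matrix.mul_apply, Matrix.transpose_apply, Finset.sum_mul]
  rw [Finset.sum_comm]
  exact Finset.sum_congr rfl fun c _ => Finset.sum_congr rfl fun a _ => by ring

end Symplectic

theorem mul_apply_mul_mul_apply {n : ℕ} (g Z : Mat2 n) (i l k m : Fin n ⊕ Fin n) :
    (g * Z) i l * (g * Z) k m
      = ∑ p : (Fin n ⊕ Fin n) × (Fin n ⊕ Fin n), g i p.1 * g k p.2 * (Z p.1 l * Z p.2 m) := by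
  rw [Matrix.mul_apply, Matrix.mul_apply, Finset.sum_mul_sum, ← Finset.univ_product_univ,
    Finset.sum_product]
  exact Finset.sum_congr rfl fun a _ => Finset.sum_congr rfl fun c _ => by ring

theorem kappaSp_entry {n : ℕ} {g : Mat2 n} (hg : g ∈ SpGroup n) (i l k m : Fin n ⊕ Fin n) :
    kappaSp n (fun w => w i l) (fun w => w k m) g
      = -2⁻¹ * (g i m * g k l - J (Fin n) ℂ i k * J (Fin n) ℂ l m) := by
  have hδ : ∑ a, ∑ c, g i a * g k c * ((1 : Mat2 n) a m * (1 : Mat2 n) l c) = g i m * g k l := by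
    simp [Matrix.one_apply]
  simp only [kappaSp_eq_half_spPairSum, lieD1_entry, mul_apply_mul_mul_apply]
  rw [spPairSum_sum_mul]
  simp only [spPairSum_entry_mul_entry, Fintype.sum_prod_type, mul_neg, mul_sub,
    Finset.sum_neg_distrib, Finset.sum_sub_distrib, hδ]
  simp only [← mul_assoc, ← Finset.sum_mul, SpGroup.sum_mul_mul_J hg]
  ring

theorem kappa_coeff_Sp_general (n : ℕ) (j k α β : Fin n)
    (g : Mat2 n) (hg : g ∈ SpGroup n) :
    kappaSp n (fun w => w (Sum.inl j) (Sum.inl α)) (fun w => w (Sum.inl k) (Sum.inl β)) g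
        = -(1 / 2) * (g (Sum.inl k) (Sum.inl α) * g (Sum.inl j) (Sum.inl β))
      ∧ kappaSp n (fun w => w (Sum.inl j) (Sum.inr α)) (fun w => w (Sum.inl k) (Sum.inr β)) g
        = -(1 / 2) * (g (Sum.inl k) (Sum.inr α) * g (Sum.inl j) (Sum.inr β))
      ∧ kappaSp n (fun w => w (Sum.inl j) (Sum.inl α)) (fun w => w (Sum.inl k) (Sum.inr β)) g
        = -(1 / 2) * (g (Sum.inl k) (Sum.inl α) * g (Sum.inl j) (Sum.inr β)) := by
  have hJ : J (Fin n) ℂ (Sum.inl j) (Sum.inl k) = 0 := by simp [Matrix.J]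
  refine ⟨?_, ?_, ?_⟩ <;> rw [kappaSp_entry hg, hJ] <;> ring

/-- on `Sp(n)` the conformality operator satisfies
`κ(z_{jα}, z_{kβ}) = −(1/2)·z_{kα}z_{jβ}`, `κ(w_{jα}, w_{kβ}) = −(1/2)·w_{kα}w_{jβ}`
and `κ(z_{jα}, w_{kβ}) = −(1/2)·z_{kα}w_{jβ}`, where `z_{jα}(g) = g_{j,α}` and
`w_{jα}(g) = g_{j,n+α}`. -/
theorem kappa_coeff_Sp (n : ℕ) (hn : 1 ≤ n) (j k α β : Fin n)
    (g : Mat2 n) (hg : g ∈ SpGroup n) :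
    kappaSp n (fun w => w (Sum.inl j) (Sum.inl α)) (fun w => w (Sum.inl k) (Sum.inl β)) g
        = -(1 / 2) * (g (Sum.inl k) (Sum.inl α) * g (Sum.inl j) (Sum.inl β))
      ∧ kappaSp n (fun w => w (Sum.inl j) (Sum.inr α)) (fun w => w (Sum.inl k) (Sum.inr β)) g
        = -(1 / 2) * (g (Sum.inl k) (Sum.inr α) * g (Sum.inl j) (Sum.inr β))
      ∧ kappaSp n (fun w => w (Sum.inl j) (Sum.inl α)) (fun w => w (Sum.inl k) (Sum.inr β)) g
        = -(1 / 2) * (g (Sum.inl k) (Sum.inl α) * g (Sum.inl j) (Sum.inr β)) :=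
  kappa_coeff_Sp_general n j k α β g hg
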